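/- Let d > 1 and let a ≥ b > 0 be integers, written as a = C(s - 1 + d, d) + A with s > 0 and 0 ≤ A < C(s - 1 + d, d - 1), and b = C(t - 1 + d, d) + B with t ≥ 0 and 0 < B ≤ C(t - 1 + d, d - 1). If A + B < C(s - 1 + d, d - 1) and (A + B)^{⟨d-1⟩} ≥ A^{⟨d-1⟩} + B^{⟨d-1⟩}, then setting a_1 = C(s - 1 + d, d) + A + B and b_1 = C(t - 1 + d, d), one has 0 ≤ b_1 < b ≤ a < a_1 ≤ C(s + d, d), a + b = a_1 + b_1, and a^{⟨d⟩} + b^{⟨d⟩} ≤ a_1^{⟨d⟩} + b_1^{⟨d⟩}. -/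

import Mathlib

/-! For `d ≥ 2`, `d - 1 ≤ n` and `r ≤ C(n, d-1)` one has
`(C(n, d) + r)^{⟨d⟩} = C(n+1, d+1) + r^{⟨d-1⟩}`: for `r < C(n, d-1)` the greedy top coefficient
is `n`, and the boundary case `r = C(n, d-1)`, where it is `n + 1`, agrees by Pascal's rule.
Applied to `a`, `a₁`, `b` and `b₁`, the top terms cancel in pairs and the inequality becomes the
hypothesis `A^{⟨d-1⟩} + B^{⟨d-1⟩} ≤ (A + B)^{⟨d-1⟩}`. -/

/-- Macaulay's function `a^{⟨d⟩}`: writing `a` in its Macaulay `d`-binomial representation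
`a = C(k_d, d) + C(k_{d-1}, d-1) + ⋯ + C(k_j, j)` (computed greedily: `k_d` is the largest
integer with `C(k_d, d) ≤ a`), we set `a^{⟨d⟩} = C(k_d+1, d+1) + ⋯ + C(k_j+1, j+1)`,
and `0^{⟨d⟩} = 0`. -/
def macaulay : ℕ → ℕ → ℕ
  | _, 0 => 0
  | 0, _ => 0
  | d + 1, a + 1 =>
    let k := Nat.findGreatest (fun k => Nat.choose k (d + 1) ≤ a + 1) (a + d + 2)
    Nat.choose (k + 1) (d + 2) + macaulay d (a + 1 - Nat.choose k (d + 1))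

@[simp]
lemma macaulay_zero_right (d : ℕ) : macaulay d 0 = 0 := by
  cases d <;> rfl

lemma add_one_le_choose_add {d : ℕ} (k : ℕ) (hd : 0 < d) : k + 1 ≤ (k + d).choose d := by
  rw [← Nat.choose_symm_add]
  calc k + 1 = (k + 1).choose k := (Nat.choose_succ_self_right k).symm
    _ ≤ (k + d).choose k := Nat.choose_le_choose k (by omega)

lemma findGreatest_choose_le_eq {d n m N : ℕ} (hn : n ≤ N) (hlo : n.choose d ≤ m)
    (hhi : m < (n + 1).choose d) :
    Nat.findGreatest (fun k => k.choose d ≤ m) N = n := by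
  refine Nat.findGreatest_eq_iff.2 ⟨hn, fun _ => hlo, fun k hnk _ hk => ?_⟩
  exact absurd ((Nat.choose_le_choose d hnk).trans hk) (not_le.2 hhi)

lemma macaulay_choose_add_of_lt {d n r : ℕ} (hd : 0 < d) (hn : d ≤ n)
    (hr : r < n.choose (d - 1)) :
    macaulay d (n.choose d + r) = (n + 1).choose (d + 1) + macaulay (d - 1) r := by
  obtain ⟨e, rfl⟩ : ∃ e, d = e + 1 := ⟨d - 1, by omega⟩
  rw [Nat.add_sub_cancel] at hr ⊢
  obtain ⟨m, hm⟩ : ∃ m, n.choose (e + 1) + r = m + 1 :=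
    ⟨_, (Nat.succ_pred_eq_of_pos ((Nat.choose_pos hn).trans_le (Nat.le_add_right _ _))).symm⟩
  have hk : Nat.findGreatest (fun k => k.choose (e + 1) ≤ m + 1) (m + e + 2) = n := by
    have := add_one_le_choose_add (n - (e + 1)) hd
    rw [Nat.sub_add_cancel hn] at this
    refine findGreatest_choose_le_eq (by omega) (by omega) ?_
    rw [Nat.choose_succ_succ']
    omega
  rw [hm, macaulay, hk, ← hm, Nat.add_sub_cancel_left]

lemma macaulay_choose {d n : ℕ} (hd : 0 < d) (hn : d ≤ n) :
    macaulay d (n.choose d) = (n + 1).choose (d + 1) := by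
  simpa using macaulay_choose_add_of_lt (r := 0) hd hn (Nat.choose_pos (by omega))

lemma macaulay_one {d : ℕ} (hd : 0 < d) : macaulay d 1 = 1 := by
  simpa using macaulay_choose hd le_rfl

lemma macaulay_choose_add {d n r : ℕ} (hd : 1 < d) (hn : d - 1 ≤ n)
    (hr : r ≤ n.choose (d - 1)) :
    macaulay d (n.choose d + r) = (n + 1).choose (d + 1) + macaulay (d - 1) r := by
  rcases hn.eq_or_lt with rfl | hn
  · rw [Nat.sub_add_cancel hd.le, Nat.choose_eq_zero_of_lt (Nat.lt_succ_self d),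
      Nat.choose_eq_zero_of_lt (Nat.sub_lt (by omega) one_pos), zero_add, zero_add]
    rw [Nat.choose_self] at hr
    interval_cases r
    · simp
    · rw [macaulay_one (by omega), macaulay_one (by omega)]
  rcases hr.lt_or_eq with hr | rfl
  · exact macaulay_choose_add_of_lt (by omega) (by omega) hr
  · obtain ⟨e, rfl⟩ : ∃ e, d = e + 1 := ⟨d - 1, by omega⟩
    rw [Nat.add_sub_cancel, add_comm (n.choose _), ← Nat.choose_succ_succ',
      macaulay_choose (by omega) (by omega), macaulay_choose (by omega) (by omega),
      Nat.choose_succ_succ' (n + 1), add_comm]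

theorem macaulay_case_one_general (d s t a b A B : ℕ) (hd : 1 < d)
    (hs : 0 < s)
    (haeq : a = Nat.choose (s - 1 + d) d + A)
    (hbeq : b = Nat.choose (t + d - 1) d + B)
    (hBpos : 0 < B) (hB : B ≤ Nat.choose (t + d - 1) (d - 1))
    (hAB : A + B < Nat.choose (s - 1 + d) (d - 1))
    (hind : macaulay (d - 1) A + macaulay (d - 1) B ≤ macaulay (d - 1) (A + B)) :
    Nat.choose (t + d - 1) d < b ∧ a < Nat.choose (s - 1 + d) d + A + B ∧
    Nat.choose (s - 1 + d) d + A + B ≤ Nat.choose (s + d) d ∧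
    a + b = (Nat.choose (s - 1 + d) d + A + B) + Nat.choose (t + d - 1) d ∧
    macaulay d a + macaulay d b ≤
      macaulay d (Nat.choose (s - 1 + d) d + A + B) + macaulay d (Nat.choose (t + d - 1) d) := by
  subst haeq hbeq
  have hsd : s + d = s - 1 + d + 1 := by omega
  have hpascal := Nat.choose_succ_left (s - 1 + d) d (by omega)
  have hma := macaulay_choose_add (n := s - 1 + d) (r := A) hd (by omega) (by omega)
  have hma₁ := macaulay_choose_add (n := s - 1 + d) (r := A + B) hd (by omega) hAB.le
  have hmb := macaulay_choose_add (n := t + d - 1) (r := B) hd (by omega) hB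
  have hmb₁ := macaulay_choose_add (n := t + d - 1) (r := 0) hd (by omega) (Nat.zero_le _)
  rw [add_zero, macaulay_zero_right, add_zero] at hmb₁
  rw [add_assoc _ A B, hma, hma₁, hmb, hmb₁, hsd, hpascal]
  omega

/-- Case 1 of the key construction: let `d > 1`, `a ≥ b > 0`, written as
`a = C(s - 1 + d, d) + A` with `s > 0`, `0 ≤ A < C(s - 1 + d, d - 1)`, and
`b = C(t - 1 + d, d) + B` with `t ≥ 0`, `0 < B ≤ C(t - 1 + d, d - 1)`.
If `A + B < C(s - 1 + d, d - 1)` and `(A + B)^{⟨d-1⟩} ≥ A^{⟨d-1⟩} + B^{⟨d-1⟩}`, then for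
`a₁ = C(s - 1 + d, d) + A + B` and `b₁ = C(t - 1 + d, d)` we have
`0 ≤ b₁ < b ≤ a < a₁ ≤ C(s + d, d)`, `a + b = a₁ + b₁`, and
`a^{⟨d⟩} + b^{⟨d⟩} ≤ a₁^{⟨d⟩} + b₁^{⟨d⟩}`.
(Since `t` may be `0`, the quantity `t - 1 + d` is rendered as `t + d - 1` in `ℕ`.) -/
theorem macaulay_case_one (d s t a b A B : ℕ) (hd : 1 < d) (hb : 0 < b) (hba : b ≤ a)
    (hs : 0 < s)
    (haeq : a = Nat.choose (s - 1 + d) d + A) (hA : A < Nat.choose (s - 1 + d) (d - 1))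
    (hbeq : b = Nat.choose (t + d - 1) d + B)
    (hBpos : 0 < B) (hB : B ≤ Nat.choose (t + d - 1) (d - 1))
    (hAB : A + B < Nat.choose (s - 1 + d) (d - 1))
    (hind : macaulay (d - 1) A + macaulay (d - 1) B ≤ macaulay (d - 1) (A + B)) :
    Nat.choose (t + d - 1) d < b ∧ a < Nat.choose (s - 1 + d) d + A + B ∧
    Nat.choose (s - 1 + d) d + A + B ≤ Nat.choose (s + d) d ∧
    a + b = (Nat.choose (s - 1 + d) d + A + B) + Nat.choose (t + d - 1) d ∧
    macaulay d a + macaulay d b ≤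
      macaulay d (Nat.choose (s - 1 + d) d + A + B) + macaulay d (Nat.choose (t + d - 1) d) :=
  macaulay_case_one_general d s t a b A B hd hs haeq hbeq hBpos hB hAB hind
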